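/- Rules (1)(b) and (2)(b) are inverses: if S is a face sequence satisfying subcondition (b) of rule (1) and S′ is the result of applying rule (1) to S, then S′ is a face sequence satisfying subcondition (b) of rule (2) and applying rule (2) to S′ returns S; conversely, if T is a face sequence satisfying subcondition (b) of rule (2) and T′ is the result of applying rule (2) to T, then T′ satisfies subcondition (b) of rule (1) and applying rule (1) to T′ returns T. -/

import Mathlib

set_option linter.unusedVariables false

/-- The alphabet `{0, 1, ∗}` for face sequences. -/
inductive Letter : Type
  | zero
  | one
  | star
  deriving DecidableEq

/-- A sequence of length `n` over the alphabet `{0, 1, ∗}`. -/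
abbrev FSeq (n : ℕ) := Fin n → Letter

/-- `S(1)`, the number of `1`'s in `S`. -/
def count1 {n : ℕ} (S : FSeq n) : ℕ := (Finset.univ.filter fun i => S i = Letter.one).card

/-- `S(0)`, the number of `0`'s in `S`. -/
def count0 {n : ℕ} (S : FSeq n) : ℕ := (Finset.univ.filter fun i => S i = Letter.zero).card

/-- The number of `∗`'s in `S`. -/
def countStar {n : ℕ} (S : FSeq n) : ℕ := (Finset.univ.filter fun i => S i = Letter.star).card

/-- A face sequence: either no `∗` and exactly `k` ones, or at most `k-1` ones and
(#ones) + (#stars) ≥ `k+1`. -/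
def FaceSeq {n : ℕ} (k : ℕ) (S : FSeq n) : Prop :=
  (countStar S = 0 ∧ count1 S = k) ∨ (count1 S + 1 ≤ k ∧ k + 1 ≤ count1 S + countStar S)

/-- `v₀`, the sequence of `k` ones followed by `n - k` zeros. -/
def v0seq (n k : ℕ) : FSeq n := fun i => if (i : ℕ) < k then Letter.one else Letter.zero

/-- `S` contains at least one `∗`. -/
def hasStar {n : ℕ} (S : FSeq n) : Prop := ∃ i, S i = Letter.star

/-- There is a `1` to the right of the rightmost `∗` (in particular `S` contains a `∗`). -/
def OneRight {n : ℕ} (S : FSeq n) : Prop :=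
  hasStar S ∧ ∃ i, S i = Letter.one ∧ ∀ j, i < j → S j ≠ Letter.star

/-- There is no `1` to the right of the rightmost `∗` (and `S` contains a `∗`). -/
def NoOneRight {n : ℕ} (S : FSeq n) : Prop :=
  hasStar S ∧ ∀ i, S i = Letter.one → ∃ j, i < j ∧ S j = Letter.star

/-- There is a `0` to the left of the leftmost `∗` (in particular `S` contains a `∗`). -/
def ZeroLeft {n : ℕ} (S : FSeq n) : Prop :=
  hasStar S ∧ ∃ i, S i = Letter.zero ∧ ∀ j, j < i → S j ≠ Letter.star

/-- There is no `0` to the left of the leftmost `∗` (and `S` contains a `∗`). -/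
def NoZeroLeft {n : ℕ} (S : FSeq n) : Prop :=
  hasStar S ∧ ∀ i, S i = Letter.zero → ∃ j, j < i ∧ S j = Letter.star

/-- `i` is the position of the rightmost `1` of `S`. -/
def IsRightmostOne {n : ℕ} (S : FSeq n) (i : Fin n) : Prop :=
  S i = Letter.one ∧ ∀ j, i < j → S j ≠ Letter.one

/-- `i` is the position of the rightmost `∗` of `S`. -/
def IsRightmostStar {n : ℕ} (S : FSeq n) (i : Fin n) : Prop :=
  S i = Letter.star ∧ ∀ j, i < j → S j ≠ Letter.star

/-- `i` is the position of the leftmost `0` of `S`. -/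
def IsLeftmostZero {n : ℕ} (S : FSeq n) (i : Fin n) : Prop :=
  S i = Letter.zero ∧ ∀ j, j < i → S j ≠ Letter.zero

/-- `i` is the position of the leftmost `∗` of `S`. -/
def IsLeftmostStar {n : ℕ} (S : FSeq n) (i : Fin n) : Prop :=
  S i = Letter.star ∧ ∀ j, j < i → S j ≠ Letter.star

/-- Condition of rule (1), subcondition (a). -/
def Cond1a {n : ℕ} (k m0 m1 : ℕ) (S : FSeq n) : Prop :=
  count1 S + 1 ≤ k ∧ OneRight S ∧ count1 S ≠ m1

/-- Condition of rule (1), subcondition (b). -/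
def Cond1b {n : ℕ} (k m0 m1 : ℕ) (S : FSeq n) : Prop :=
  count1 S + 1 ≤ k ∧ OneRight S ∧ count1 S = m1 ∧ m0 < count0 S

/-- Condition of rule (1), subcondition (c): no `0` to the left of the leftmost `∗`. -/
def Cond1c {n : ℕ} (k m0 m1 : ℕ) (S : FSeq n) : Prop :=
  count1 S + 1 ≤ k ∧ OneRight S ∧ count1 S = m1 ∧ count0 S = m0 ∧ NoZeroLeft S

/-- Condition of rule (2), subcondition (a): here `count1 S + 1 ≠ m1` encodes `S(1) ≠ m₁ - 1`. -/
def Cond2a {n : ℕ} (k m0 m1 : ℕ) (S : FSeq n) : Prop :=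
  count1 S + 2 ≤ k ∧ NoOneRight S ∧ count1 S + 1 ≠ m1

/-- Condition of rule (2), subcondition (b). -/
def Cond2b {n : ℕ} (k m0 m1 : ℕ) (S : FSeq n) : Prop :=
  count1 S + 2 ≤ k ∧ NoOneRight S ∧ count1 S + 1 = m1 ∧ m0 < count0 S

/-- Condition of rule (2), subcondition (c). -/
def Cond2c {n : ℕ} (k m0 m1 : ℕ) (S : FSeq n) : Prop :=
  count1 S + 2 ≤ k ∧ NoOneRight S ∧ count1 S + 1 = m1 ∧ count0 S = m0 ∧ NoZeroLeft S

/-- `S` is of type 1 (satisfies the condition of rule (1)). -/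
def Type1 {n : ℕ} (k m0 m1 : ℕ) (S : FSeq n) : Prop :=
  Cond1a k m0 m1 S ∨ Cond1b k m0 m1 S ∨ Cond1c k m0 m1 S

/-- `S` is of type 2 (satisfies the condition of rule (2)). -/
def Type2 {n : ℕ} (k m0 m1 : ℕ) (S : FSeq n) : Prop :=
  Cond2a k m0 m1 S ∨ Cond2b k m0 m1 S ∨ Cond2c k m0 m1 S

/-- `S` is of type 3: `S(1) = k-1`, `S(0) ≤ n-k-1`, no `1` right of the rightmost `∗`,
a `0` left of the leftmost `∗`. -/
def Type3 {n : ℕ} (k : ℕ) (S : FSeq n) : Prop :=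
  count1 S + 1 = k ∧ count0 S + k + 1 ≤ n ∧ NoOneRight S ∧ ZeroLeft S

/-- `S` is of type 4: `S(1) = k-1`, `S(0) ≤ n-k-2`, no `1` right of the rightmost `∗`,
no `0` left of the leftmost `∗`. -/
def Type4 {n : ℕ} (k : ℕ) (S : FSeq n) : Prop :=
  count1 S + 1 = k ∧ count0 S + k + 2 ≤ n ∧ NoOneRight S ∧ NoZeroLeft S

/-- `S` is of type 5: `S(1) = m₁`, `S(0) ≤ m₀`, a `1` right of the rightmost `∗`,
a `0` left of the leftmost `∗`. -/
def Type5 {n : ℕ} (m0 m1 : ℕ) (S : FSeq n) : Prop :=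
  count1 S = m1 ∧ count0 S ≤ m0 ∧ OneRight S ∧ ZeroLeft S

/-- `S` is of type 6: `S(1) = m₁`, `S(0) < m₀`, a `1` right of the rightmost `∗`,
no `0` left of the leftmost `∗`. -/
def Type6 {n : ℕ} (m0 m1 : ℕ) (S : FSeq n) : Prop :=
  count1 S = m1 ∧ count0 S < m0 ∧ OneRight S ∧ NoZeroLeft S

/-- `S` is of type 7: `S(1) = m₁-1`, `S(0) ≤ m₀`, no `1` right of the rightmost `∗`,
a `0` left of the leftmost `∗`. -/
def Type7 {n : ℕ} (m0 m1 : ℕ) (S : FSeq n) : Prop :=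
  count1 S + 1 = m1 ∧ count0 S ≤ m0 ∧ NoOneRight S ∧ ZeroLeft S

/-- `S` is of type 8: `S(1) = m₁-1`, `S(0) < m₀`, no `1` right of the rightmost `∗`,
no `0` left of the leftmost `∗`. -/
def Type8 {n : ℕ} (m0 m1 : ℕ) (S : FSeq n) : Prop :=
  count1 S + 1 = m1 ∧ count0 S < m0 ∧ NoOneRight S ∧ NoZeroLeft S

/-- `S` is of type 9: `S(1) = k`, `S(0) = n-k`, and `S ≠ v₀`. -/
def Type9 {n : ℕ} (k : ℕ) (S : FSeq n) : Prop :=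
  count1 S = k ∧ count0 S + k = n ∧ S ≠ v0seq n k

/-- `S` is of type 10: `S(1) = k-1`, `S(0) = n-k-1`, no `1` right of the rightmost `∗`,
no `0` left of the leftmost `∗`. -/
def Type10 {n : ℕ} (k : ℕ) (S : FSeq n) : Prop :=
  count1 S + 1 = k ∧ count0 S + k + 1 = n ∧ NoOneRight S ∧ NoZeroLeft S

/-- `S` is of type `i` for `1 ≤ i ≤ 10` (and of no type otherwise). -/
def OfType {n : ℕ} (k m0 m1 : ℕ) (i : ℕ) (S : FSeq n) : Prop :=
  match i with
  | 1 => Type1 k m0 m1 S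
  | 2 => Type2 k m0 m1 S
  | 3 => Type3 k S
  | 4 => Type4 k S
  | 5 => Type5 m0 m1 S
  | 6 => Type6 m0 m1 S
  | 7 => Type7 m0 m1 S
  | 8 => Type8 m0 m1 S
  | 9 => Type9 k S
  | 10 => Type10 k S
  | _ => False

/-- The replacement of rule (1): replace the rightmost `1` with `∗`. -/
def Apply1 {n : ℕ} (S S' : FSeq n) : Prop :=
  ∃ i, IsRightmostOne S i ∧ S' = Function.update S i Letter.star

/-- The replacement of rule (2): replace the rightmost `∗` with `1`. -/
def Apply2 {n : ℕ} (S S' : FSeq n) : Prop :=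
  ∃ i, IsRightmostStar S i ∧ S' = Function.update S i Letter.one

/-- The replacement of rules (3), (5) and (7): replace the leftmost `0` with `∗`. -/
def Apply3 {n : ℕ} (S S' : FSeq n) : Prop :=
  ∃ i, IsLeftmostZero S i ∧ S' = Function.update S i Letter.star

/-- The replacement of rules (4), (6) and (8): replace the leftmost `∗` with `0`. -/
def Apply4 {n : ℕ} (S S' : FSeq n) : Prop :=
  ∃ i, IsLeftmostStar S i ∧ S' = Function.update S i Letter.zero

/-- The replacement of rule (9): replace the leftmost `0` and the rightmost `1` each with `∗`. -/
def Apply9 {n : ℕ} (S S' : FSeq n) : Prop :=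
  ∃ i j, IsLeftmostZero S i ∧ IsRightmostOne S j ∧
    S' = Function.update (Function.update S i Letter.star) j Letter.star

/-- The replacement of rule (10): replace the leftmost `∗` with `0` and the other `∗` with `1`. -/
def Apply10 {n : ℕ} (S S' : FSeq n) : Prop :=
  ∃ i j, IsLeftmostStar S i ∧ IsRightmostStar S j ∧ i ≠ j ∧
    S' = Function.update (Function.update S i Letter.zero) j Letter.one

/-- The matching `V` on face sequences: a face sequence `S` of type 1, 3, 5, 7 or 9 is
matched with the result `S'` of applying the corresponding rule to it. -/
def Vmatch {n : ℕ} (k m0 m1 : ℕ) (S S' : FSeq n) : Prop :=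
  FaceSeq k S ∧
    ((Type1 k m0 m1 S ∧ Apply1 S S') ∨
     (Type3 k S ∧ Apply3 S S') ∨
     (Type5 m0 m1 S ∧ Apply3 S S') ∨
     (Type7 m0 m1 S ∧ Apply3 S S') ∨
     (Type9 k S ∧ Apply9 S S'))

/-- The vertex set of a face sequence `S`: the vertex sequences (0/1-sequences with
exactly `k` ones) agreeing with `S` wherever `S` is not `∗`. -/
def VertexSet {n : ℕ} (k : ℕ) (S : FSeq n) : Set (FSeq n) :=
  {v | (∀ i, v i ≠ Letter.star) ∧ count1 v = k ∧ ∀ i, S i ≠ Letter.star → v i = S i}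

/-- The dimension of the face `F(S)`. -/
def fdim {n : ℕ} (S : FSeq n) : ℕ :=
  if countStar S = 0 then 0 else countStar S - 1

/-- `T` is a codimension-1 face of `S`. -/
def Codim1 {n : ℕ} (k : ℕ) (T S : FSeq n) : Prop :=
  VertexSet k T ⊂ VertexSet k S ∧ fdim T + 1 = fdim S

/-- A (nontrivial) `V`-path `a₀, b₀, a₁, b₁, …, b_r, a_{r+1}` of face sequences. -/
structure VPath (n k m0 m1 r : ℕ) where
  a : Fin (r + 2) → FSeq n
  b : Fin (r + 1) → FSeq n
  face_a : ∀ i, FaceSeq k (a i)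
  face_b : ∀ i, FaceSeq k (b i)
  mem : ∀ i : Fin (r + 1), Vmatch k m0 m1 (a i.castSucc) (b i)
  codim_left : ∀ i : Fin (r + 1), Codim1 k (a i.castSucc) (b i)
  codim_right : ∀ i : Fin (r + 1), Codim1 k (a i.succ) (b i)
  step_ne : ∀ i : Fin (r + 1), a i.castSucc ≠ a i.succ

/-!
Replacing the rightmost `1` by `∗` moves one unit from `S(1)` to the number of `∗`'s and leaves
`S(0)` unchanged, so the numerical parts of (1)(b) and (2)(b) correspond exactly. If a `1` lies
right of the rightmost `∗`, the rightmost `1` becomes the rightmost `∗` and no `1` is left to its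
right; conversely, if no `1` lies right of the rightmost `∗`, that `∗` becomes the rightmost `1`.
-/

open Finset Function

theorem Finset.card_filter_update_add {α β : Type*} [Fintype α] [DecidableEq α] [DecidableEq β]
    (f : α → β) (i : α) (b c : β) :
    #{j | update f i b j = c} + (if f i = c then 1 else 0) =
      #{j | f j = c} + (if b = c then 1 else 0) := by
  simp only [card_filter]
  rw [← add_sum_erase _ _ (mem_univ i), ← add_sum_erase _ _ (mem_univ i),
    sum_congr rfl fun j hj => by rw [update_of_ne (ne_of_mem_erase hj)]]
  simp only [update_self]
  omega

variable {n k m0 m1 : ℕ} {S : FSeq n} {i : Fin n}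

theorem faceSeq_iff_of_count1_lt (h : count1 S < k) :
    FaceSeq k S ↔ k + 1 ≤ count1 S + countStar S := by
  unfold FaceSeq
  omega

theorem counts_update_star_of_eq_one (hi : S i = Letter.one) :
    count1 (update S i Letter.star) + 1 = count1 S ∧
      count0 (update S i Letter.star) = count0 S ∧
      countStar (update S i Letter.star) = countStar S + 1 := by
  have h1 := card_filter_update_add S i Letter.star Letter.one
  have h0 := card_filter_update_add S i Letter.star Letter.zero
  have hs := card_filter_update_add S i Letter.star Letter.star
  simp only [hi, if_true, if_false, reduceCtorEq, add_zero] at h1 h0 hs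
  exact ⟨h1, h0, hs⟩

theorem counts_update_one_of_eq_star (hi : S i = Letter.star) :
    count1 (update S i Letter.one) = count1 S + 1 ∧
      count0 (update S i Letter.one) = count0 S ∧
      countStar (update S i Letter.one) + 1 = countStar S := by
  have h1 := card_filter_update_add S i Letter.one Letter.one
  have h0 := card_filter_update_add S i Letter.one Letter.zero
  have hs := card_filter_update_add S i Letter.one Letter.star
  simp only [hi, if_true, if_false, reduceCtorEq, add_zero] at h1 h0 hs
  exact ⟨h1, h0, hs⟩

theorem isRightmostStar_update_star (hS : OneRight S) (hi : IsRightmostOne S i) :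
    IsRightmostStar (update S i Letter.star) i := by
  obtain ⟨-, i₁, hi₁, hno⟩ := hS
  have hle : i₁ ≤ i := not_lt.mp fun h => hi.2 i₁ h hi₁
  refine ⟨update_self .., fun j hj => ?_⟩
  rw [update_of_ne hj.ne']
  exact hno j (hle.trans_lt hj)

theorem noOneRight_update_star (hi : IsRightmostOne S i) :
    NoOneRight (update S i Letter.star) := by
  refine ⟨⟨i, update_self ..⟩, fun j hj => ⟨i, ?_, update_self ..⟩⟩
  have hji : j ≠ i := by rintro rfl; simp at hj
  rw [update_of_ne hji] at hj
  exact lt_of_le_of_ne (not_lt.mp fun h => hi.2 j h hj) hji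

theorem isRightmostOne_update_one (hS : NoOneRight S) (hi : IsRightmostStar S i) :
    IsRightmostOne (update S i Letter.one) i := by
  refine ⟨update_self .., fun j hj hone => ?_⟩
  rw [update_of_ne hj.ne'] at hone
  obtain ⟨j', hjj', hj'⟩ := hS.2 j hone
  exact hi.2 j' (hj.trans hjj') hj'

theorem oneRight_update_one (hS : hasStar (update S i Letter.one)) (hi : IsRightmostStar S i) :
    OneRight (update S i Letter.one) :=
  ⟨hS, i, update_self .., fun j hj => by rw [update_of_ne hj.ne']; exact hi.2 j hj⟩

theorem hasStar_of_countStar_pos (h : 0 < countStar S) : hasStar S := by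
  obtain ⟨i, hi⟩ := card_pos.mp h
  exact ⟨i, (mem_filter.mp hi).2⟩

theorem Cond1b.cond2b_update_star (hS : Cond1b k m0 m1 S) (hF : FaceSeq k S)
    (hi : IsRightmostOne S i) :
    FaceSeq k (update S i Letter.star) ∧ Cond2b k m0 m1 (update S i Letter.star) ∧
      IsRightmostStar (update S i Letter.star) i := by
  obtain ⟨hk, hOR, hm1, hm0⟩ := hS
  obtain ⟨h1, h0, hs⟩ := counts_update_star_of_eq_one hi.1
  rw [faceSeq_iff_of_count1_lt (by omega)] at hF ⊢
  exact ⟨by omega, ⟨by omega, noOneRight_update_star hi, by omega, by omega⟩,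
    isRightmostStar_update_star hOR hi⟩

theorem Cond2b.cond1b_update_one (hS : Cond2b k m0 m1 S) (hF : FaceSeq k S)
    (hi : IsRightmostStar S i) :
    FaceSeq k (update S i Letter.one) ∧ Cond1b k m0 m1 (update S i Letter.one) ∧
      IsRightmostOne (update S i Letter.one) i := by
  obtain ⟨hk, hNOR, hm1, hm0⟩ := hS
  obtain ⟨h1, h0, hs⟩ := counts_update_one_of_eq_star hi.1
  rw [faceSeq_iff_of_count1_lt (by omega)] at hF ⊢
  -- `FaceSeq` with `S(1) ≤ k - 2` forces at least three `∗`'s, so one survives the update.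
  have hstar := hasStar_of_countStar_pos (S := update S i Letter.one) (by omega)
  exact ⟨by omega, ⟨by omega, oneRight_update_one hstar hi, by omega, by omega⟩,
    isRightmostOne_update_one hNOR hi⟩

theorem update_update_self_eq (S : FSeq n) (i : Fin n) (a : Letter) :
    update (update S i a) i (S i) = S := by
  rw [update_idem, update_eq_self]

theorem rule1b_rule2b_inverse_general (n k m0 m1 : ℕ) :
    (∀ S S' : FSeq n, FaceSeq k S → Cond1b k m0 m1 S → Apply1 S S' →
      FaceSeq k S' ∧ Cond2b k m0 m1 S' ∧ Apply2 S' S) ∧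
    (∀ T T' : FSeq n, FaceSeq k T → Cond2b k m0 m1 T → Apply2 T T' →
      FaceSeq k T' ∧ Cond1b k m0 m1 T' ∧ Apply1 T' T) := by
  constructor
  · rintro S _ hF hS ⟨i, hi, rfl⟩
    obtain ⟨hF', hS', hi'⟩ := hS.cond2b_update_star hF hi
    exact ⟨hF', hS', i, hi', by rw [← hi.1, update_update_self_eq]⟩
  · rintro T _ hF hT ⟨i, hi, rfl⟩
    obtain ⟨hF', hT', hi'⟩ := hT.cond1b_update_one hF hi
    exact ⟨hF', hT', i, hi', by rw [← hi.1, update_update_self_eq]⟩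

/-- **Rules (1)(b) and (2)(b) are inverses of each other.** -/
theorem rule1b_rule2b_inverse (n k m0 m1 : ℕ) (hk1 : 1 ≤ k) (hk2 : k ≤ n - 1)
    (hm0 : m0 + k + 1 ≤ n) (hm1l : 1 ≤ m1) (hm1u : m1 + 1 ≤ k) :
    (∀ S S' : FSeq n, FaceSeq k S → Cond1b k m0 m1 S → Apply1 S S' →
      FaceSeq k S' ∧ Cond2b k m0 m1 S' ∧ Apply2 S' S) ∧
    (∀ T T' : FSeq n, FaceSeq k T → Cond2b k m0 m1 T → Apply2 T T' →
      FaceSeq k T' ∧ Cond1b k m0 m1 T' ∧ Apply1 T' T) :=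
  rule1b_rule2b_inverse_general n k m0 m1
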